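/- For the cycle C_n with n ≥ 3, EISPN(C_5) = 4 and EISPN(C_n) = n for all n ≠ 5. -/

import Mathlib

set_option maxHeartbeats 4000000

open Finset

variable {V : Type*}

/-- Number of external private neighbors with respect to `U`. -/
noncomputable def extCount (G : SimpleGraph V) (U : Finset V) : ℕ :=
  Nat.card {w : V // w ∉ U ∧ Nat.card {v : V // v ∈ U ∧ G.Adj w v} = 1}

/-- Number of internal private neighbors with respect to `U`. -/
noncomputable def intCount (G : SimpleGraph V) (U : Finset V) : ℕ :=
  Nat.card {w : V // w ∈ U ∧ Nat.card {v : V // v ∈ U ∧ G.Adj w v} = 1}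

/-- Number of self private neighbors with respect to `U`. -/
noncomputable def selfCount (G : SimpleGraph V) (U : Finset V) : ℕ :=
  Nat.card {w : V // w ∈ U ∧ ∀ v ∈ U, ¬ G.Adj w v}

/-- `EISPN G`: maximum combined number of external, internal and self private neighbors. -/
noncomputable def EISPN [Fintype V] [DecidableEq V] (G : SimpleGraph V) : ℕ :=
  (univ : Finset (Finset V)).sup fun U => extCount G U + intCount G U + selfCount G U

/-- The cycle graph on `ZMod n`, with edges between consecutive residues. -/
def myCycle (n : ℕ) : SimpleGraph (ZMod n) :=
  SimpleGraph.fromRel (fun i j => i + 1 = j)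

/-! ### Auxiliary machinery -/

/-- The membership pattern achieving `n` private neighbors (for `n ≥ 3`, `n ≠ 5`). -/
def inU (n k : ℕ) : Prop :=
  (n % 3 = 0 ∧ k % 3 = 0) ∨
  (n % 3 = 1 ∧ (k ≤ 1 ∨ (4 ≤ k ∧ k % 3 = 1))) ∨
  (n % 3 = 2 ∧ (k = 0 ∨ k = 1 ∨ k = 4 ∨ k = 5 ∨ (8 ≤ k ∧ k % 3 = 2)))

instance (n k : ℕ) : Decidable (inU n k) :=
  inferInstanceAs (Decidable (_ ∨ _))

lemma key (n : ℕ) (hn : 3 ≤ n) (hn5 : n ≠ 5) (k : ℕ) (_hk : k < n) :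
    (inU n k → ¬(inU n (if k = 0 then n-1 else k-1) ∧ inU n (if k+1 = n then 0 else k+1))) ∧
    (¬ inU n k → (inU n (if k = 0 then n-1 else k-1) ↔ ¬ inU n (if k+1 = n then 0 else k+1))) := by
  unfold inU
  split <;> split <;> omega

/-- Number of neighbors of `w` (in the cycle) that lie in `U`. -/
def nb (n : ℕ) (U : Finset (ZMod n)) (w : ZMod n) : ℕ :=
  (if w - 1 ∈ U then 1 else 0) + (if w + 1 ∈ U then 1 else 0)

lemma adj_iff {n : ℕ} (hn : 3 ≤ n) {w v : ZMod n} :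
    (myCycle n).Adj w v ↔ v = w + 1 ∨ v = w - 1 := by
  haveI : NeZero n := ⟨by omega⟩
  haveI : Fact (1 < n) := ⟨by omega⟩
  rw [myCycle, SimpleGraph.fromRel_adj]
  constructor
  · rintro ⟨hne, h | h⟩
    · exact Or.inl h.symm
    · exact Or.inr (eq_sub_of_add_eq h)
  · rintro (rfl | rfl)
    · exact ⟨(left_ne_add.2 one_ne_zero), Or.inl rfl⟩
    · refine ⟨?_, Or.inr (sub_add_cancel w 1)⟩
      rw [sub_eq_add_neg]
      exact left_ne_add.2 (neg_ne_zero.2 one_ne_zero)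

lemma card_nbhd {n : ℕ} (hn : 3 ≤ n) (U : Finset (ZMod n)) (w : ZMod n) :
    Nat.card {v : ZMod n // v ∈ U ∧ (myCycle n).Adj w v} = nb n U w := by
  haveI : NeZero n := ⟨by omega⟩
  have hne : w + 1 ≠ w - 1 := by
    intro h
    have h2 : ((2 : ℕ) : ZMod n) = 0 := by
      have := sub_eq_zero_of_eq h
      push_cast
      linear_combination this
    rw [ZMod.natCast_eq_zero_iff] at h2
    have := Nat.le_of_dvd (by norm_num) h2
    omega
  have hiff : ∀ v : ZMod n,
      (v ∈ U ∧ (myCycle n).Adj w v) ↔ v ∈ U ∩ ({w + 1, w - 1} : Finset (ZMod n)) := by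
    intro v; simp [adj_iff hn, and_comm]
  rw [Nat.card_congr (Equiv.subtypeEquivRight hiff), Nat.card_eq_finsetCard]
  have : U ∩ ({w + 1, w - 1} : Finset (ZMod n))
      = ({w + 1, w - 1} : Finset (ZMod n)).filter (· ∈ U) := by
    ext x; simp [and_comm]
  rw [this, Finset.filter_insert, Finset.filter_singleton, nb]
  by_cases h1 : w + 1 ∈ U <;> by_cases h2 : w - 1 ∈ U <;>
    simp only [h1, h2, if_true, if_false, ite_true, ite_false]
  · rw [Finset.card_insert_of_notMem (by simp [hne]), Finset.card_singleton]
  · simp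
  · simp
  · simp

/-- `w` is a private neighbor (of one of the three kinds) with respect to `U`. -/
def privAt (n : ℕ) (U : Finset (ZMod n)) (w : ZMod n) : Prop :=
  (w ∈ U → nb n U w ≤ 1) ∧ (w ∉ U → nb n U w = 1)

instance (n : ℕ) (U : Finset (ZMod n)) (w : ZMod n) : Decidable (privAt n U w) :=
  inferInstanceAs (Decidable (_ ∧ _))

lemma self_iff {n : ℕ} (hn : 3 ≤ n) (U : Finset (ZMod n)) (w : ZMod n) :
    (∀ v ∈ U, ¬ (myCycle n).Adj w v) ↔ nb n U w = 0 := by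
  unfold nb
  constructor
  · intro h
    have h1 : w - 1 ∉ U := fun hm => h _ hm ((adj_iff hn).2 (Or.inr rfl))
    have h2 : w + 1 ∉ U := fun hm => h _ hm ((adj_iff hn).2 (Or.inl rfl))
    simp [h1, h2]
  · intro h v hv hadj
    rcases (adj_iff hn).1 hadj with rfl | rfl <;> simp [hv] at h

lemma total_eq {n : ℕ} (hn : 3 ≤ n) (U : Finset (ZMod n)) :
    extCount (myCycle n) U + intCount (myCycle n) U + selfCount (myCycle n) U
      = Set.ncard {w : ZMod n | privAt n U w} := by
  haveI : NeZero n := ⟨by omega⟩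
  have hE : extCount (myCycle n) U = Set.ncard {w : ZMod n | w ∉ U ∧ nb n U w = 1} := by
    rw [extCount, ← Nat.card_coe_set_eq]
    exact Nat.card_congr (Equiv.subtypeEquivRight fun w =>
      and_congr_right fun _ => by rw [card_nbhd hn])
  have hI : intCount (myCycle n) U = Set.ncard {w : ZMod n | w ∈ U ∧ nb n U w = 1} := by
    rw [intCount, ← Nat.card_coe_set_eq]
    exact Nat.card_congr (Equiv.subtypeEquivRight fun w =>
      and_congr_right fun _ => by rw [card_nbhd hn])
  have hS : selfCount (myCycle n) U = Set.ncard {w : ZMod n | w ∈ U ∧ nb n U w = 0} := by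
    rw [selfCount, ← Nat.card_coe_set_eq]
    exact Nat.card_congr (Equiv.subtypeEquivRight fun w =>
      and_congr_right fun _ => self_iff hn U w)
  rw [hE, hI, hS]
  have hd1 : Disjoint {w : ZMod n | w ∈ U ∧ nb n U w = 1}
      {w : ZMod n | w ∈ U ∧ nb n U w = 0} := by
    rw [Set.disjoint_left]
    rintro w ⟨_, h1⟩ ⟨_, h0⟩
    omega
  have hd2 : Disjoint {w : ZMod n | w ∉ U ∧ nb n U w = 1}
      ({w : ZMod n | w ∈ U ∧ nb n U w = 1} ∪ {w : ZMod n | w ∈ U ∧ nb n U w = 0}) := by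
    rw [Set.disjoint_left]
    rintro w ⟨hw, _⟩ (⟨hw2, _⟩ | ⟨hw2, _⟩) <;> exact hw hw2
  rw [Nat.add_assoc, ← Set.ncard_union_eq hd1 (Set.toFinite _) (Set.toFinite _),
    ← Set.ncard_union_eq hd2 (Set.toFinite _) (Set.toFinite _)]
  congr 1
  ext w
  by_cases hw : w ∈ U <;> simp [privAt, hw] <;> omega

lemma total_le {n : ℕ} [NeZero n] (hn : 3 ≤ n) (U : Finset (ZMod n)) :
    extCount (myCycle n) U + intCount (myCycle n) U + selfCount (myCycle n) U ≤ n := by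
  rw [total_eq hn U]
  calc Set.ncard {w : ZMod n | privAt n U w} ≤ Set.ncard (Set.univ : Set (ZMod n)) :=
        Set.ncard_le_ncard (Set.subset_univ _) Set.finite_univ
    _ = n := by rw [Set.ncard_univ, Nat.card_zmod]

lemma val_sub_one {n : ℕ} [NeZero n] (hn : 3 ≤ n) (w : ZMod n) :
    (w - 1).val = if w.val = 0 then n - 1 else w.val - 1 := by
  have h1 : (w - 1) = w + ((n - 1 : ℕ) : ZMod n) := by
    rw [Nat.cast_sub (by omega)]
    simp [ZMod.natCast_self, sub_eq_add_neg]
  rw [h1, ZMod.val_add, ZMod.val_natCast, Nat.mod_eq_of_lt (show n - 1 < n by omega)]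
  have hv := ZMod.val_lt w
  split
  · rename_i h; rw [h]; rw [Nat.mod_eq_of_lt (by omega)]; omega
  · rename_i h
    have : w.val + (n - 1) = n + (w.val - 1) := by omega
    rw [this, Nat.add_mod_left, Nat.mod_eq_of_lt (by omega)]

lemma val_add_one {n : ℕ} [NeZero n] (hn : 3 ≤ n) (w : ZMod n) :
    (w + 1).val = if w.val + 1 = n then 0 else w.val + 1 := by
  haveI : Fact (1 < n) := ⟨by omega⟩
  rw [ZMod.val_add, ZMod.val_one]
  have hv := ZMod.val_lt w
  split
  · rename_i h; rw [h, Nat.mod_self]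
  · rename_i h; rw [Nat.mod_eq_of_lt (by omega)]

theorem EISPN_cycle :
    EISPN (myCycle 5) = 4 ∧
    ∀ (n : ℕ) [NeZero n], 3 ≤ n → n ≠ 5 → EISPN (myCycle n) = n := by
  constructor
  · apply le_antisymm
    · apply Finset.sup_le
      intro U _
      rw [total_eq (by norm_num) U]
      have hx : ∃ w : ZMod 5, ¬ privAt 5 U w := by revert U; decide
      obtain ⟨w, hw⟩ := hx
      have hss : {w : ZMod 5 | privAt 5 U w} ⊂ Set.univ := by
        refine (Set.ssubset_univ_iff).2 ?_
        intro h
        exact hw (Set.eq_univ_iff_forall.mp h w)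
      have := Set.ncard_lt_ncard hss Set.finite_univ
      rw [Set.ncard_univ, Nat.card_zmod] at this
      omega
    · have hle := Finset.le_sup (f := fun U => extCount (myCycle 5) U + intCount (myCycle 5) U
        + selfCount (myCycle 5) U) (Finset.mem_univ ({0, 1} : Finset (ZMod 5)))
      refine le_trans ?_ hle
      show (4 : ℕ) ≤ extCount (myCycle 5) {0, 1} + intCount (myCycle 5) {0, 1}
        + selfCount (myCycle 5) {0, 1}
      rw [total_eq (by norm_num)]
      have hset : {w : ZMod 5 | privAt 5 {0, 1} w} = ↑({0, 1, 2, 4} : Finset (ZMod 5)) := by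
        ext w
        revert w
        decide
      rw [hset, Set.ncard_coe_finset]
      decide
  · intro n _ hn hn5
    apply le_antisymm
    · exact Finset.sup_le fun U _ => total_le hn U
    · set Un : Finset (ZMod n) := Finset.univ.filter (fun z => inU n z.val) with hUn
      have hmem : ∀ z : ZMod n, z ∈ Un ↔ inU n z.val := by
        intro z; simp [hUn]
      have hpriv : ∀ w : ZMod n, privAt n Un w := by
        intro w
        have hv := ZMod.val_lt w
        have hk := key n hn hn5 w.val hv
        have hA : (w - 1 ∈ Un) ↔ inU n (if w.val = 0 then n - 1 else w.val - 1) := by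
          rw [hmem, val_sub_one hn]
        have hB : (w + 1 ∈ Un) ↔ inU n (if w.val + 1 = n then 0 else w.val + 1) := by
          rw [hmem, val_add_one hn]
        constructor
        · intro hw
          rw [hmem] at hw
          have h3 := hk.1 hw
          unfold nb
          by_cases hA' : w - 1 ∈ Un <;> by_cases hB' : w + 1 ∈ Un <;> simp [hA', hB']
          exact h3 ⟨hA.mp hA', hB.mp hB'⟩
        · intro hw
          rw [hmem] at hw
          have h3 := hk.2 hw
          unfold nb
          by_cases hA' : w - 1 ∈ Un <;> by_cases hB' : w + 1 ∈ Un <;> simp [hA', hB']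
          · exact absurd (hB.mp hB') (h3.mp (hA.mp hA'))
          · exact hA' (hA.mpr (h3.mpr (fun hb => hB' (hB.mpr hb))))
      have hle := Finset.le_sup (f := fun U => extCount (myCycle n) U + intCount (myCycle n) U
        + selfCount (myCycle n) U) (Finset.mem_univ Un)
      refine le_trans ?_ hle
      show (n : ℕ) ≤ extCount (myCycle n) Un + intCount (myCycle n) Un + selfCount (myCycle n) Un
      rw [total_eq hn]
      have : {w : ZMod n | privAt n Un w} = Set.univ := Set.eq_univ_of_forall hpriv
      rw [this, Set.ncard_univ, Nat.card_zmod]
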